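/- Let u : ℝ^n → ℝ^m be continuous, vanishing on {x_n ≤ 0}, homogeneous of degree κ with respect to the origin, and homogeneous of degree κ with respect to every point of the hyperplane {x_n = 0}. Then u(x', x_n) = u(0, 1) x_n^κ for all x' ∈ ℝ^{n-1} and x_n > 0; in particular u(x) = f · c (x_n^+)^κ for a fixed vector f ∈ ℝ^m and constant c ≥ 0. -/
import Mathlib


open scoped RealInnerProductSpace

theorem stmt_15 (n m : ℕ) (hm : 0 < m) (κ : ℝ) (hκ : 0 < κ)
    (e : EuclideanSpace ℝ (Fin n)) (he : ‖e‖ = 1)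
    (u : EuclideanSpace ℝ (Fin n) → EuclideanSpace ℝ (Fin m))
    (hcont : Continuous u)
    (hvanish : ∀ x, ⟪x, e⟫ ≤ 0 → u x = 0)
    (hhom0 : ∀ lam : ℝ, 0 < lam → ∀ x, u (lam • x) = lam ^ κ • u x)
    (hhom : ∀ y, ⟪y, e⟫ = 0 → ∀ lam : ℝ, 0 < lam → ∀ x,
      u (y + lam • (x - y)) = lam ^ κ • u x) :
    (∀ x, 0 < ⟪x, e⟫ → u x = (⟪x, e⟫ ^ κ) • u e) ∧
    ∃ (f : EuclideanSpace ℝ (Fin m)) (c : ℝ), ‖f‖ = 1 ∧ 0 ≤ c ∧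
      ∀ x, u x = (c * (max ⟪x, e⟫ 0) ^ κ) • f := by
  have he2 : ⟪e, e⟫ = 1 := by
    rw [real_inner_self_eq_norm_sq, he]; norm_num
  have key : ∀ x, 0 < ⟪x, e⟫ → u x = (⟪x, e⟫ ^ κ) • u e := by
    intro x ht
    set t := ⟪x, e⟫ with htdef
    set x' := x - t • e with hx'
    have hx'e : ⟪x', e⟫ = 0 := by
      rw [hx', inner_sub_left, real_inner_smul_left, he2, mul_one, sub_self]
    by_cases hx0 : x' = 0
    · have hx : x = t • e := by
        have := hx0
        rw [hx', sub_eq_zero] at this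
        exact this
      rw [hx]; exact hhom0 t ht e
    · have hr : 0 < ‖x'‖ := norm_pos_iff.mpr hx0
      set r := ‖x'‖ with hrdef
      have htr : 0 < t + r := by positivity
      have hz : u ((t + r) • e) = (t + r) ^ κ • u e := hhom0 _ htr e
      have hy : ⟪((1 + t / r) : ℝ) • x', e⟫ = 0 := by
        rw [real_inner_smul_left, hx'e, mul_zero]
      have hlam : 0 < t / (t + r) := div_pos ht htr
      have hmain := hhom _ hy _ hlam ((t + r) • e)
      have heq : ((1 + t / r) : ℝ) • x' + (t / (t + r)) • ((t + r) • e - (1 + t / r) • x') = x := by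
        have hx : x = x' + t • e := by rw [hx']; abel
        rw [hx]
        match_scalars
        · field_simp
          ring
        · field_simp
          ring
      rw [heq, hz, smul_smul] at hmain
      rw [hmain, Real.div_rpow ht.le htr.le, div_mul_cancel₀]
      exact (Real.rpow_pos_of_pos htr κ).ne'
  refine ⟨key, ?_⟩
  by_cases hue : u e = 0
  · refine ⟨EuclideanSpace.single ⟨0, hm⟩ 1, 0, by simp, le_refl 0, ?_⟩
    intro x
    rcases le_or_gt ⟪x, e⟫ 0 with h | h
    · rw [hvanish x h]; simp
    · rw [key x h, hue]; simp
  · refine ⟨‖u e‖⁻¹ • u e, ‖u e‖, ?_, norm_nonneg _, ?_⟩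
    · rw [norm_smul, norm_inv, norm_norm, inv_mul_cancel₀ (norm_ne_zero_iff.mpr hue)]
    · intro x
      rcases le_or_gt ⟪x, e⟫ 0 with h | h
      · rw [hvanish x h, max_eq_right h, Real.zero_rpow hκ.ne']
        simp
      · rw [key x h, max_eq_left h.le, smul_smul,
          mul_comm (‖u e‖) (⟪x, e⟫ ^ κ), mul_assoc,
          mul_inv_cancel₀ (norm_ne_zero_iff.mpr hue), mul_one]
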